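/- arXiv:2404.19116 — 8 statements merged into one kernel-verified Lean document; each statement's English description precedes it below -/
import Mathlib

section
/- The cutoff p̄(α) = ((r + λ(1-α))R_L) / ((r+λ)R_H - λαR_L) is strictly decreasing in α on [0,1]. -/
/-! For `α ≤ 1` the denominator stays above `r R_H + λ (R_H - R_L) > 0`, so the cutoff is a
Möbius map `α ↦ (p - q α)/(s - t α)` without a pole there. Such a map is strictly decreasing
exactly when its determinant `q s - p t` is positive, and here
`q s - p t = λ R_L (r + λ) (R_H - R_L)`. -/

lemma strictAntiOn_linearFractional {p q s t : ℝ} {S : Set ℝ}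
    (hden : ∀ x ∈ S, 0 < s - t * x) (hdet : p * t < q * s) :
    StrictAntiOn (fun x => (p - q * x) / (s - t * x)) S := by
  intro a ha b hb hab
  rw [div_lt_div_iff₀ (hden b hb) (hden a ha)]
  have key : (p - q * a) * (s - t * b) - (p - q * b) * (s - t * a)
      = (q * s - p * t) * (b - a) := by ring
  nlinarith [mul_pos (sub_pos.mpr hdet) (sub_pos.mpr hab)]

lemma cutoff_denominator_pos {r l RL RH α : ℝ} (hr : 0 < r) (hl : 0 < l)
    (hRL : 0 < RL) (hRH : RL < RH) (hα : α ≤ 1) :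
    0 < (r + l) * RH - l * RL * α := by
  have hlα : l * RL * α ≤ l * RL := mul_le_of_le_one_right (by positivity) hα
  nlinarith [mul_pos hr (hRL.trans hRH), mul_pos hl (sub_pos.mpr hRH)]

/-- The cutoff `p̄(α) = ((r + λ(1-α))R_L)/((r+λ)R_H - λαR_L)` is strictly
decreasing in `α` on `[0,1]`. -/
theorem cutoff_strictAnti_in_alpha (r l RL RH : ℝ) (hr : 0 < r) (hl : 0 < l)
    (hRL : 0 < RL) (hRH : RL < RH) :
    StrictAntiOn (fun α : ℝ => ((r + l * (1 - α)) * RL) / ((r + l) * RH - l * α * RL))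
      (Set.Icc (0 : ℝ) 1) := by
  have hmobius : (fun α : ℝ => ((r + l * (1 - α)) * RL) / ((r + l) * RH - l * α * RL))
      = fun α => ((r + l) * RL - l * RL * α) / ((r + l) * RH - l * RL * α) := by
    funext α; ring_nf
  have hdet : (r + l) * RL * (l * RL) < l * RL * ((r + l) * RH) := by
    have := mul_pos (mul_pos (mul_pos hl hRL) (add_pos hr hl)) (sub_pos.mpr hRH)
    nlinarith
  rw [hmobius]
  exact (strictAntiOn_linearFractional
    (fun α hα => cutoff_denominator_pos hr hl hRL hRH hα) hdet).mono Set.Icc_subset_Iic_self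
end

section
/- The cutoff p̄(α) = ((r + λ(1-α))R_L) / ((r+λ)R_H - λαR_L) is strictly increasing in r whenever α ∈ (0,1]. -/
/-! In `r` the cutoff is the linear fractional map `r ↦ (RL r + l(1-α)RL) / (RH r + l(RH - αRL))`,
whose denominator is positive for `r > 0`. Where its denominator is positive, such a map is
strictly increasing as soon as its determinant is positive, and here the determinant is
`l α RL (RH - RL) > 0`. -/

theorem strictMonoOn_div_affine {a b c d : ℝ} {s : Set ℝ} (hdet : 0 < a * d - b * c)
    (hpos : ∀ x ∈ s, 0 < c * x + d) :
    StrictMonoOn (fun x => (a * x + b) / (c * x + d)) s := by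
  intro x hx y hy hxy
  rw [div_lt_div_iff₀ (hpos x hx) (hpos y hy)]
  have hcross : (a * y + b) * (c * x + d) - (a * x + b) * (c * y + d) =
      (a * d - b * c) * (y - x) := by ring
  nlinarith [mul_pos hdet (sub_pos.2 hxy)]

/-- The cutoff `p̄(α)` is strictly increasing in the discount rate `r`
whenever `α ∈ (0,1]`. -/
theorem cutoff_strictMono_in_r (l RL RH α : ℝ) (hl : 0 < l)
    (hRL : 0 < RL) (hRH : RL < RH) (hα : α ∈ Set.Ioc (0 : ℝ) 1) :
    StrictMonoOn (fun r : ℝ => ((r + l * (1 - α)) * RL) / ((r + l) * RH - l * α * RL))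
      (Set.Ioi (0 : ℝ)) := by
  obtain ⟨hα0, hα1⟩ := hα
  have hgap : 0 < RH - α * RL := by nlinarith
  have hdet : 0 < RL * (l * (RH - α * RL)) - l * (1 - α) * RL * RH := by
    have : RL * (l * (RH - α * RL)) - l * (1 - α) * RL * RH = l * α * RL * (RH - RL) := by ring
    rw [this]
    have hspread := sub_pos.2 hRH
    positivity
  have hpos : ∀ r ∈ Set.Ioi (0 : ℝ), 0 < RH * r + l * (RH - α * RL) := fun r hr => by
    have hr : 0 < r := hr
    have hRH0 := hRL.trans hRH
    positivity
  convert strictMonoOn_div_affine hdet hpos using 2 with r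
  ring
end

section
/- The cutoff p̄(α) = ((r + λ(1-α))R_L) / ((r+λ)R_H - λαR_L) is strictly decreasing in λ whenever α ∈ (0,1], and constant in λ when α = 0. -/
/-! As a function of `λ` the cutoff is the Möbius map `λ ↦ (a + bλ)/(c + dλ)` with
`a = r R_L`, `b = (1 - α) R_L`, `c = r R_H`, `d = R_H - α R_L`. Its denominator is positive
for `λ > 0`, so it is strictly decreasing iff `a d - b c = r α R_L (R_H - R_L) > 0`, i.e. iff
`α > 0`; for `α = 0` numerator and denominator share the factor `r + λ`. -/

theorem strictAntiOn_affine_div_affine {a b c d : ℝ} {s : Set ℝ}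
    (hden : ∀ l ∈ s, 0 < c + d * l) (hdet : b * c < a * d) :
    StrictAntiOn (fun l => (a + b * l) / (c + d * l)) s := by
  intro l₁ hl₁ l₂ hl₂ hlt
  rw [div_lt_div_iff₀ (hden l₂ hl₂) (hden l₁ hl₁)]
  nlinarith [mul_pos (sub_pos.2 hlt) (sub_pos.2 hdet)]

/-- The cutoff `p̄(α)` is strictly decreasing in the arrival rate `λ` whenever
`α ∈ (0,1]`, and constant in `λ` when `α = 0`. -/
theorem cutoff_anti_in_lambda (r RL RH α : ℝ) (hr : 0 < r)
    (hRL : 0 < RL) (hRH : RL < RH) :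
    (α ∈ Set.Ioc (0 : ℝ) 1 →
      StrictAntiOn (fun l : ℝ => ((r + l * (1 - α)) * RL) / ((r + l) * RH - l * α * RL))
        (Set.Ioi (0 : ℝ))) ∧
    (α = 0 → ∀ l₁ ∈ Set.Ioi (0 : ℝ), ∀ l₂ ∈ Set.Ioi (0 : ℝ),
      ((r + l₁ * (1 - α)) * RL) / ((r + l₁) * RH - l₁ * α * RL)
        = ((r + l₂ * (1 - α)) * RL) / ((r + l₂) * RH - l₂ * α * RL)) := by
  constructor
  · rintro ⟨hα0, hα1⟩
    have hmobius : (fun l : ℝ => ((r + l * (1 - α)) * RL) / ((r + l) * RH - l * α * RL)) =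
        fun l => (r * RL + (1 - α) * RL * l) / (r * RH + (RH - α * RL) * l) := by
      funext l
      congr 1 <;> ring
    rw [hmobius]
    refine strictAntiOn_affine_div_affine (fun l hl => ?_) ?_
    · have hRH0 : 0 < RH := hRL.trans hRH
      have hd : 0 < RH - α * RL := by nlinarith
      have hl : 0 < l := hl
      positivity
    · nlinarith [mul_pos (mul_pos (mul_pos hr hRL) hα0) (sub_pos.2 hRH)]
  · rintro rfl
    have hconst : ∀ l ∈ Set.Ioi (0 : ℝ),
        ((r + l * (1 - 0)) * RL) / ((r + l) * RH - l * 0 * RL) = RL / RH := by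
      intro l hl
      have hrl : r + l ≠ 0 := by
        have hl : 0 < l := hl
        positivity
      simp only [sub_zero, mul_one, mul_zero, zero_mul]
      exact mul_div_mul_left RL RH hrl
    intro l₁ hl₁ l₂ hl₂
    rw [hconst l₁ hl₁, hconst l₂ hl₂]
end

section
/- Let p̄(α) = ((r + λ(1-α))R_L)/((r+λ)R_H - λαR_L). The value p = p̄(α) is the unique solution in (0,1) of the indifference equation p R_H + (1-p)(λ/(r+λ)) R_L = R_L + p (λ(1-α)/(r+λ(1-α))) (R_H - R_L). -/
/-!
Multiplying the indifference equation by `(r + λ)(r + λ(1 - α))` turns it into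
`r · (p · ((r + λ) R_H - λ α R_L) - (r + λ(1 - α)) R_L) = 0`, which is linear in `p`; hence its
only root is `p̄(α)`. That root lies in `(0, 1)` because the numerator is positive and the
denominator exceeds it by `(r + λ)(R_H - R_L) > 0`.
-/

section Indifference

variable {r l RL RH α : ℝ}

theorem indifference_sub_mul_eq (p : ℝ) (hrl : r + l ≠ 0) (hrla : r + l * (1 - α) ≠ 0) :
    (p * RH + (1 - p) * (l / (r + l)) * RL
        - (RL + p * (l * (1 - α) / (r + l * (1 - α))) * (RH - RL)))
      * ((r + l) * (r + l * (1 - α)))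
      = r * (p * ((r + l) * RH - l * α * RL) - (r + l * (1 - α)) * RL) := by
  field_simp
  ring

theorem indifference_iff_mul_eq (p : ℝ) (hr : r ≠ 0) (hrl : r + l ≠ 0)
    (hrla : r + l * (1 - α) ≠ 0) :
    p * RH + (1 - p) * (l / (r + l)) * RL
        = RL + p * (l * (1 - α) / (r + l * (1 - α))) * (RH - RL) ↔
      p * ((r + l) * RH - l * α * RL) = (r + l * (1 - α)) * RL := by
  rw [← sub_eq_zero, ← mul_left_inj' (mul_ne_zero hrl hrla), zero_mul,
    indifference_sub_mul_eq p hrl hrla, mul_eq_zero, sub_eq_zero, or_iff_right hr]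

theorem cutoff_numerator_lt_denominator (hr : 0 < r) (hl : 0 < l) (hRH : RL < RH) :
    (r + l * (1 - α)) * RL < (r + l) * RH - l * α * RL := by
  nlinarith [mul_pos (add_pos hr hl) (sub_pos.2 hRH)]

end Indifference

/-- `p = p̄(α)` is the unique solution in `(0,1)` of the indifference equation
`p R_H + (1-p)(λ/(r+λ)) R_L = R_L + p (λ(1-α)/(r+λ(1-α))) (R_H - R_L)`. -/
theorem cutoff_unique_indifference (r l RL RH α : ℝ) (hr : 0 < r) (hl : 0 < l)
    (hRL : 0 < RL) (hRH : RL < RH) (hα : α ∈ Set.Icc (0 : ℝ) 1) :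
    let pbar := ((r + l * (1 - α)) * RL) / ((r + l) * RH - l * α * RL)
    pbar ∈ Set.Ioo (0 : ℝ) 1 ∧
    pbar * RH + (1 - pbar) * (l / (r + l)) * RL
      = RL + pbar * (l * (1 - α) / (r + l * (1 - α))) * (RH - RL) ∧
    ∀ p ∈ Set.Ioo (0 : ℝ) 1,
      p * RH + (1 - p) * (l / (r + l)) * RL
        = RL + p * (l * (1 - α) / (r + l * (1 - α))) * (RH - RL) → p = pbar := by
  intro pbar
  have hrla : 0 < r + l * (1 - α) := by nlinarith [hα.2]
  have hN : 0 < (r + l * (1 - α)) * RL := mul_pos hrla hRL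
  have hND := cutoff_numerator_lt_denominator (α := α) hr hl hRH
  have hD : (r + l) * RH - l * α * RL ≠ 0 := (hN.trans hND).ne'
  have hiff := fun p ↦ indifference_iff_mul_eq (RL := RL) (RH := RH) p hr.ne'
    (add_pos hr hl).ne' hrla.ne'
  refine ⟨⟨div_pos hN (hN.trans hND), (div_lt_one (hN.trans hND)).2 hND⟩,
    (hiff pbar).2 (div_mul_cancel₀ _ hD), fun p _ hp ↦ ?_⟩
  exact (eq_div_iff hD).2 ((hiff p).1 hp)
end

section
/- In the balanced news setting with one safe project and full disentanglement cutoff, the payoff of exploiting H, namely V_H(p) = pR_H + (1-p)(λ/(r+λ))R_L, exceeds the payoff of exploiting L, namely V_L(p) = R_L + p(λ(1-α)/(r+λ(1-α)))(R_H - R_L), if and only if p > p̄(α), where p̄(α) = ((r+λ(1-α))R_L)/((r+λ)R_H - λαR_L). -/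
/-!
Both payoffs are affine in `p`, so their difference is a multiple of `p - p̄(α)`; the multiplier
`r ((r + λ) R_H - λ α R_L) / ((r + λ) (r + λ (1 - α)))` is positive, whence the sign of the
difference is that of `p - p̄(α)`.
-/

noncomputable section

namespace BalancedNews

-- The paper's `V_H(p)`, `V_L(p)` and `p̄(α)`, with `l` for `λ`.
def exploitHPayoff (r l RL RH p : ℝ) : ℝ :=
  p * RH + (1 - p) * (l / (r + l)) * RL

def exploitLPayoff (r l RL RH α p : ℝ) : ℝ :=
  RL + p * (l * (1 - α) / (r + l * (1 - α))) * (RH - RL)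

def cutoff (r l RL RH α : ℝ) : ℝ :=
  ((r + l * (1 - α)) * RL) / ((r + l) * RH - l * α * RL)

lemma exploitHPayoff_sub_exploitLPayoff {r l RL RH α : ℝ} (hA : r + l ≠ 0)
    (hB : r + l * (1 - α) ≠ 0) (hD : (r + l) * RH - l * α * RL ≠ 0) (p : ℝ) :
    exploitHPayoff r l RL RH p - exploitLPayoff r l RL RH α p
      = r * ((r + l) * RH - l * α * RL) / ((r + l) * (r + l * (1 - α)))
          * (p - cutoff r l RL RH α) := by
  unfold exploitHPayoff exploitLPayoff cutoff
  -- keeps `field_simp` from expanding the cutoff's denominator, which would hide `hD` from it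
  generalize hDdef : (r + l) * RH - l * α * RL = D at hD ⊢
  field_simp
  rw [← hDdef]
  ring

lemma cutoff_denom_pos {r l RL RH α : ℝ} (hr : 0 < r) (hl : 0 < l) (hRL : 0 < RL)
    (hRH : RL < RH) (hα : α ≤ 1) : 0 < (r + l) * RH - l * α * RL := by
  have : α * RL < RH := by nlinarith
  nlinarith

lemma exploitLPayoff_lt_exploitHPayoff_iff {r l RL RH α : ℝ} (hr : 0 < r) (hl : 0 < l)
    (hRL : 0 < RL) (hRH : RL < RH) (hα : α ≤ 1) (p : ℝ) :
    exploitLPayoff r l RL RH α p < exploitHPayoff r l RL RH p ↔ cutoff r l RL RH α < p := by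
  have hA : 0 < r + l := by linarith
  have hB : 0 < r + l * (1 - α) := by nlinarith
  have hD := cutoff_denom_pos hr hl hRL hRH hα
  have hslope : 0 < r * ((r + l) * RH - l * α * RL) / ((r + l) * (r + l * (1 - α))) := by
    positivity
  rw [← sub_pos, exploitHPayoff_sub_exploitLPayoff hA.ne' hB.ne' hD.ne',
    mul_pos_iff_of_pos_left hslope, sub_pos]

end BalancedNews

open BalancedNews in
theorem exploitH_iff_above_cutoff_general (r l RL RH α p : ℝ) (hr : 0 < r) (hl : 0 < l)
    (hRL : 0 < RL) (hRH : RL < RH) (hα : α ∈ Set.Icc (0 : ℝ) 1) :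
    p * RH + (1 - p) * (l / (r + l)) * RL
        > RL + p * (l * (1 - α) / (r + l * (1 - α))) * (RH - RL)
      ↔ p > ((r + l * (1 - α)) * RL) / ((r + l) * RH - l * α * RL) :=
  exploitLPayoff_lt_exploitHPayoff_iff hr hl hRL hRH hα.2 p

/-- The payoff of exploiting `H` exceeds the payoff of exploiting `L` iff
the belief `p` exceeds the cutoff `p̄(α)`. -/
theorem exploitH_iff_above_cutoff (r l RL RH α p : ℝ) (hr : 0 < r) (hl : 0 < l)
    (hRL : 0 < RL) (hRH : RL < RH) (hα : α ∈ Set.Icc (0 : ℝ) 1)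
    (hp : p ∈ Set.Icc (0 : ℝ) 1) :
    p * RH + (1 - p) * (l / (r + l)) * RL
        > RL + p * (l * (1 - α) / (r + l * (1 - α))) * (RH - RL)
      ↔ p > ((r + l * (1 - α)) * RL) / ((r + l) * RH - l * α * RL) :=
  exploitH_iff_above_cutoff_general r l RL RH α p hr hl hRL hRH hα

end
end

section
/- In the balanced news setting with two risky projects, exploring project x first until news (then y) yields expected payoff (1-ρ_x)e_0 + ρ_x(1-ρ_y)e_x + ρ_x ρ_y e*, where ρ_z = λ_z/(r+λ_z). Exploring x first weakly dominates exploring y first if and only if λ_x(e_x - e_0) ≥ λ_y(e_y - e_0). -/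
/-!
Writing `ρ_z = λ_z / (r + λ_z)` (the expected discount factor `E[e^{-rτ}]` until news on `z`),
the payoff difference between the two orders is `ρ_x (1 - ρ_y)(e_x - e_0) - ρ_y (1 - ρ_x)(e_y - e_0)`,
since the `e*` terms cancel. As `ρ_x (1 - ρ_y) = λ_x · r / ((r + λ_x)(r + λ_y))` and symmetrically,
the difference is a positive multiple of `λ_x (e_x - e_0) - λ_y (e_y - e_0)`.
-/

noncomputable section

def newsDiscount (r l : ℝ) : ℝ := l / (r + l)

def sequentialPayoff (ρa ρb e0 ea estar : ℝ) : ℝ :=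
  (1 - ρa) * e0 + ρa * (1 - ρb) * ea + ρa * ρb * estar

theorem sequentialPayoff_sub_swap (ρx ρy e0 ex ey estar : ℝ) :
    sequentialPayoff ρx ρy e0 ex estar - sequentialPayoff ρy ρx e0 ey estar
      = ρx * (1 - ρy) * (ex - e0) - ρy * (1 - ρx) * (ey - e0) := by
  unfold sequentialPayoff
  ring

theorem one_sub_newsDiscount {r l : ℝ} (h : r + l ≠ 0) :
    1 - newsDiscount r l = r / (r + l) := by
  unfold newsDiscount
  field_simp
  ring

theorem newsDiscount_mul_one_sub {r l m : ℝ} (hl : r + l ≠ 0) (hm : r + m ≠ 0) :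
    newsDiscount r l * (1 - newsDiscount r m) = r / ((r + l) * (r + m)) * l := by
  rw [one_sub_newsDiscount hm, newsDiscount]
  field_simp

end

theorem explore_x_first_iff_general (r lx ly e0 ex ey estar : ℝ)
    (hr : 0 < r) (hlx : 0 < lx) (hly : 0 < ly) :
    let ρx := lx / (r + lx)
    let ρy := ly / (r + ly)
    (1 - ρx) * e0 + ρx * (1 - ρy) * ex + ρx * ρy * estar
        ≥ (1 - ρy) * e0 + ρy * (1 - ρx) * ey + ρy * ρx * estar
      ↔ lx * (ex - e0) ≥ ly * (ey - e0) := by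
  show sequentialPayoff (newsDiscount r lx) (newsDiscount r ly) e0 ex estar
      ≥ sequentialPayoff (newsDiscount r ly) (newsDiscount r lx) e0 ey estar ↔ _
  have hx : 0 < r + lx := by linarith
  have hy : 0 < r + ly := by linarith
  have hc : 0 < r / ((r + lx) * (r + ly)) := by positivity
  rw [ge_iff_le, ← sub_nonneg, sequentialPayoff_sub_swap,
    newsDiscount_mul_one_sub hx.ne' hy.ne', newsDiscount_mul_one_sub hy.ne' hx.ne',
    mul_comm (r + ly), mul_assoc, mul_assoc, ← mul_sub, mul_nonneg_iff_of_pos_left hc,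
    sub_nonneg]

/-- Balanced news, two risky projects: exploring `x` first until news (then `y`)
yields `(1-ρ_x)e₀ + ρ_x(1-ρ_y)e_x + ρ_x ρ_y e*`; exploring `x` first weakly
dominates exploring `y` first iff `λ_x(e_x - e₀) ≥ λ_y(e_y - e₀)`. -/
theorem explore_x_first_iff (r lx ly e0 ex ey estar : ℝ)
    (hr : 0 < r) (hlx : 0 < lx) (hly : 0 < ly)
    (hex : e0 ≤ ex) (hey : e0 ≤ ey) (hex' : ex ≤ estar) (hey' : ey ≤ estar) :
    let ρx := lx / (r + lx)
    let ρy := ly / (r + ly)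
    (1 - ρx) * e0 + ρx * (1 - ρy) * ex + ρx * ρy * estar
        ≥ (1 - ρy) * e0 + ρy * (1 - ρx) * ey + ρy * ρx * estar
      ↔ lx * (ex - e0) ≥ ly * (ey - e0) :=
  explore_x_first_iff_general r lx ly e0 ex ey estar hr hlx hly
end

section
/- No exploration index exists: there is no function I : (0,1) × (0,∞) × (0,∞) → ℝ such that for every pair of projects (p_1,R_1,λ_1), (p_2,R_2,λ_2) in a balanced news setting, the agent optimally explores project 1 first if and only if I(p_1,R_1,λ_1) > I(p_2,R_2,λ_2). In particular, there exist three projects with parameters (p_i, R_i, λ_i), i=1,2,3, such that the optimal-exploration relation (project i explored over project j iff λ_i(1-p̃_i) > λ_j(1-p̃_j), with p̃ the modified probabilities) is cyclic: 1 ≻ 2, 2 ≻ 3, 3 ≻ 1. -/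
/-!
Take three projects with the same prior `p = 1/4`: `x = (R, λ) = (1, 1)`, `y = (2, 1/2)` and
`z = (1/2, 2)`. In each pairwise comparison the favourable project keeps `p̃ = 1/4`, while the other
one has `p̃ = 1/2` (`x` against `y`, `z` against `x`) or `p̃ = 1` (`z` against `y`). The indices
`λ (1 - p̃)` are `1/2 > 3/8` for `x` over `y`, `3/8 > 0` for `y` over `z` and `1 > 3/4` for `z`
over `x`, a cycle; a real-valued index would turn it into `I x > I y > I z > I x`.
-/

/-- Modified probability of project `x` (parameters `p, R`) given the
alternative project `y` (parameters `q, S`). -/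
noncomputable def ptilde (p R q S : ℝ) : ℝ :=
  if p * R ≥ q * S then p else min (q * S / R) 1

/-- Project `x = (p,R,l)` is strictly optimally explored over `y = (q,S,m)`. -/
noncomputable def prefExplore (p R l q S m : ℝ) : Prop :=
  l * (1 - ptilde p R q S) > m * (1 - ptilde q S p R)

lemma prefExplore_cycle :
    prefExplore (1/4) 1 1 (1/4) 2 (1/2) ∧
    prefExplore (1/4) 2 (1/2) (1/4) (1/2) 2 ∧
    prefExplore (1/4) (1/2) 2 (1/4) 1 1 := by
  norm_num [prefExplore, ptilde]

/-- No exploration index exists: there is no index `I` such that, for all pairs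
of projects in the balanced news setting, project 1 is strictly optimally
explored over project 2 iff `I` of project 1 exceeds `I` of project 2.
Moreover, there is a cyclic triple of projects. -/
theorem no_exploration_index :
    (¬ ∃ I : ℝ → ℝ → ℝ → ℝ,
      ∀ p₁ R₁ l₁ p₂ R₂ l₂ : ℝ,
        p₁ ∈ Set.Ioo (0 : ℝ) 1 → 0 < R₁ → 0 < l₁ →
        p₂ ∈ Set.Ioo (0 : ℝ) 1 → 0 < R₂ → 0 < l₂ →
        (prefExplore p₁ R₁ l₁ p₂ R₂ l₂ ↔ I p₁ R₁ l₁ > I p₂ R₂ l₂)) ∧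
    (∃ p₁ R₁ l₁ p₂ R₂ l₂ p₃ R₃ l₃ : ℝ,
      p₁ ∈ Set.Ioo (0 : ℝ) 1 ∧ 0 < R₁ ∧ 0 < l₁ ∧
      p₂ ∈ Set.Ioo (0 : ℝ) 1 ∧ 0 < R₂ ∧ 0 < l₂ ∧
      p₃ ∈ Set.Ioo (0 : ℝ) 1 ∧ 0 < R₃ ∧ 0 < l₃ ∧
      prefExplore p₁ R₁ l₁ p₂ R₂ l₂ ∧
      prefExplore p₂ R₂ l₂ p₃ R₃ l₃ ∧
      prefExplore p₃ R₃ l₃ p₁ R₁ l₁) := by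
  obtain ⟨hxy, hyz, hzx⟩ := prefExplore_cycle
  have hp : (1/4 : ℝ) ∈ Set.Ioo 0 1 := by norm_num
  refine ⟨?_, ⟨_, _, _, _, _, _, _, _, _, hp, by norm_num, by norm_num, hp, by norm_num,
    by norm_num, hp, by norm_num, by norm_num, hxy, hyz, hzx⟩⟩
  rintro ⟨I, hI⟩
  have hIxy := (hI _ _ _ _ _ _ hp one_pos one_pos hp two_pos (by norm_num)).mp hxy
  have hIyz := (hI _ _ _ _ _ _ hp two_pos (by norm_num) hp (by norm_num) two_pos).mp hyz
  have hIzx := (hI _ _ _ _ _ _ hp (by norm_num) two_pos hp one_pos one_pos).mp hzx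
  exact lt_irrefl _ (hIzx.trans (hIyz.trans hIxy))
end

section
/- In the pure good news setting with p_L R_L < p_H R_H < R_L, exploring project H until news yields payoff e_0 + w ρ_H (e_H - e_0), while exploring project L until news yields e_0 + ρ_L(1-ρ_H)(e_L - e_0) + ρ_L ρ_H (e_H - e_0). Exploring H is weakly optimal iff ρ_H (w - ρ_L)(e_H - e_0) ≥ ρ_L(1-ρ_H)(e_L - e_0), which, substituting e_H - e_0 = (1-p_H) p_L R_L and e_L - e_0 = (1-p_L) p_H R_H... is equivalent to λ_H^g ((w-ρ_L)/(1-ρ_L)) (1-p_H) ≥ λ_L^g (1 - p̃_L), where p̃_L = p_H R_H / R_L. -/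
/-! Writing `ρ = λ/(r+λ)`, so that `1 - ρ = r/(r+λ)`, both inequalities are positive rescalings
of the same one, `λ_H (w - ρ_L)(1 - p_H) R_L ≥ r ρ_L (R_L - p_H R_H)`: the payoff comparison
after multiplying by `(r + λ_H)/p_L`, the intensity comparison after multiplying by
`R_L (1 - ρ_L) = R_L r/(r + λ_L)`. -/

section

variable {r lL lH pL pH RL RH x : ℝ}

theorem one_sub_div_add_self (h : r + lL ≠ 0) : 1 - lL / (r + lL) = r / (r + lL) := by
  rw [one_sub_div h, add_sub_cancel_right]

theorem payoff_comparison_iff {y : ℝ} (hlH : 0 < r + lH) (hpL : 0 < pL) :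
    lH / (r + lH) * x * (pH * RH + (1 - pH) * (pL * RL) - pH * RH)
        ≥ y * (1 - lH / (r + lH)) * (pL * RL + (1 - pL) * (pH * RH) - pH * RH)
      ↔ lH * x * (1 - pH) * RL ≥ r * y * (RL - pH * RH) := by
  have hscale : 0 < pL / (r + lH) := div_pos hpL hlH
  have hlhs : lH / (r + lH) * x * (pH * RH + (1 - pH) * (pL * RL) - pH * RH)
      = pL / (r + lH) * (lH * x * (1 - pH) * RL) := by ring
  have hrhs : y * (1 - lH / (r + lH)) * (pL * RL + (1 - pL) * (pH * RH) - pH * RH)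
      = pL / (r + lH) * (r * y * (RL - pH * RH)) := by
    rw [one_sub_div_add_self hlH.ne']; ring
  rw [ge_iff_le, ge_iff_le, hlhs, hrhs, mul_le_mul_iff_of_pos_left hscale]

theorem intensity_comparison_iff (hr : 0 < r) (hlL : 0 < r + lL) (hRL : 0 < RL) :
    lH * (x / (1 - lL / (r + lL))) * (1 - pH) ≥ lL * (1 - pH * RH / RL)
      ↔ lH * x * (1 - pH) * RL ≥ r * (lL / (r + lL)) * (RL - pH * RH) := by
  have hscale : 0 < RL * (r / (r + lL)) := mul_pos hRL (div_pos hr hlL)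
  have hlhs : RL * (r / (r + lL)) * (lH * (x / (1 - lL / (r + lL))) * (1 - pH))
      = lH * x * (1 - pH) * RL := by
    rw [one_sub_div_add_self hlL.ne']; field_simp
  have hrhs : RL * (r / (r + lL)) * (lL * (1 - pH * RH / RL))
      = r * (lL / (r + lL)) * (RL - pH * RH) := by
    field_simp
  rw [ge_iff_le, ge_iff_le, ← mul_le_mul_iff_of_pos_left hscale, hlhs, hrhs]

end

theorem initial_choice_pure_good_news_general (r lLg lHg pL pH RL RH w : ℝ)
    (hr : 0 < r) (hlL : 0 < lLg) (hlH : 0 < lHg)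
    (hpL : pL ∈ Set.Ioo (0 : ℝ) 1)
    (hRL : 0 < RL) :
    let ρL := lLg / (r + lLg)
    let ρH := lHg / (r + lHg)
    let e0 := pH * RH
    let eH := pH * RH + (1 - pH) * (pL * RL)
    let eL := pL * RL + (1 - pL) * (pH * RH)
    let ptL := pH * RH / RL
    (ρH * (w - ρL) * (eH - e0) ≥ ρL * (1 - ρH) * (eL - e0)
      ↔ lHg * ((w - ρL) / (1 - ρL)) * (1 - pH) ≥ lLg * (1 - ptL)) := by
  intro ρL ρH e0 eH eL ptL
  rw [payoff_comparison_iff (by positivity) hpL.1,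
    intensity_comparison_iff hr (by positivity) hRL]

/-- Initial exploration choice with pure good news: exploring project `H`
until news is weakly optimal, i.e.
`ρ_H (w - ρ_L)(e_H - e₀) ≥ ρ_L (1 - ρ_H)(e_L - e₀)`, iff
`λ_H^g ((w-ρ_L)/(1-ρ_L)) (1-p_H) ≥ λ_L^g (1 - p̃_L)` with `p̃_L = p_H R_H / R_L`. -/
theorem initial_choice_pure_good_news (r lLg lHg pL pH RL RH w : ℝ)
    (hr : 0 < r) (hlL : 0 < lLg) (hlH : 0 < lHg)
    (hpL : pL ∈ Set.Ioo (0 : ℝ) 1) (hpH : pH ∈ Set.Ioo (0 : ℝ) 1)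
    (hRL : 0 < RL) (hRH : RL < RH)
    (horder : pL * RL < pH * RH) (horder' : pH * RH < RL)
    (hw : w ∈ Set.Ioc (0 : ℝ) 1) :
    let ρL := lLg / (r + lLg)
    let ρH := lHg / (r + lHg)
    let e0 := pH * RH
    let eH := pH * RH + (1 - pH) * (pL * RL)
    let eL := pL * RL + (1 - pL) * (pH * RH)
    let ptL := pH * RH / RL
    (ρH * (w - ρL) * (eH - e0) ≥ ρL * (1 - ρH) * (eL - e0)
      ↔ lHg * ((w - ρL) / (1 - ρL)) * (1 - pH) ≥ lLg * (1 - ptL)) :=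
  initial_choice_pure_good_news_general r lLg lHg pL pH RL RH w hr hlL hlH hpL hRL
end
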